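/- arXiv:2507.14253 — 3 statements merged into one kernel-verified Lean document; each statement's English description precedes it below -/
import Mathlib

section
/- Let γ ∈ (0, π/2) and η ∈ [-π, π]. Then sup{cos²α : α ∈ ℝ, cos(α - η) ≥ cos γ} equals 1 if η ∈ A₁, cos²(η - γ) if η ∈ A₂, and cos²(η + γ) if η ∈ A₃, where A₁ = [-γ,γ] ∪ [π-γ,π] ∪ [-π,-π+γ], A₂ = [γ,π/2] ∪ [-π+γ,-π/2], A₃ = [π/2,π-γ] ∪ [-π/2,-γ]. -/
open Real

private lemma cos_ge_of_abs_le {γ δ : ℝ} (hγπ : γ ≤ π) (h : |δ| ≤ γ) :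
    Real.cos γ ≤ Real.cos δ := by
  rw [← Real.cos_abs δ]
  exact Real.cos_le_cos_of_nonneg_of_le_pi (abs_nonneg δ) hγπ h

private lemma mem_reduce {γ η x : ℝ} (hγ : γ ∈ Set.Ioo 0 (π / 2))
    (hx : ∃ α : ℝ, Real.cos γ ≤ Real.cos (α - η) ∧ x = (Real.cos α) ^ 2) :
    ∃ β : ℝ, |β| ≤ γ ∧ x = (Real.cos (η + β)) ^ 2 := by
  obtain ⟨α, h1, rfl⟩ := hx
  have h2π : (0 : ℝ) < 2 * π := by positivity
  set n := toIocDiv h2π (-π) (α - η) with hn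
  set β := toIocMod h2π (-π) (α - η) with hβdef
  have hmem : β ∈ Set.Ioc (-π) (-π + 2 * π) := toIocMod_mem_Ioc h2π (-π) (α - η)
  have hβeq : β = (α - η) - n * (2 * π) := by
    rw [hβdef, toIocMod, hn]; push_cast [zsmul_eq_mul]; ring
  have hcosβ : Real.cos β = Real.cos (α - η) := by
    rw [hβeq, Real.cos_sub_int_mul_two_pi]
  have habs : |β| ≤ γ := by
    by_contra hlt
    push_neg at hlt
    have hβπ : |β| ≤ π := abs_le.mpr ⟨hmem.1.le, by linarith [hmem.2]⟩
    have : Real.cos |β| < Real.cos γ :=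
      Real.cos_lt_cos_of_nonneg_of_le_pi hγ.1.le hβπ hlt
    rw [Real.cos_abs, hcosβ] at this
    linarith
  refine ⟨β, habs, ?_⟩
  have : α = (η + β) + n * (2 * π) := by rw [hβeq]; ring
  rw [this, show (η + β) + (n : ℝ) * (2 * π) = (η + β) - (-n : ℤ) * (2 * π) by
    push_cast; ring, Real.cos_sub_int_mul_two_pi]

private lemma S_nonempty (γ η : ℝ) :
    ((Real.cos (η - γ)) ^ 2) ∈
      {x : ℝ | ∃ α : ℝ, Real.cos γ ≤ Real.cos (α - η) ∧ x = (Real.cos α) ^ 2} :=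
  ⟨η - γ, by rw [show η - γ - η = -γ by ring, Real.cos_neg], rfl⟩

private lemma S_bdd (γ η : ℝ) :
    BddAbove {x : ℝ | ∃ α : ℝ, Real.cos γ ≤ Real.cos (α - η) ∧ x = (Real.cos α) ^ 2} := by
  refine ⟨1, ?_⟩
  rintro x ⟨α, -, rfl⟩
  exact Real.cos_sq_le_one α

private lemma S_neg (γ η : ℝ) :
    {x : ℝ | ∃ α : ℝ, Real.cos γ ≤ Real.cos (α - η) ∧ x = (Real.cos α) ^ 2}
      = {x : ℝ | ∃ α : ℝ, Real.cos γ ≤ Real.cos (α - (-η)) ∧ x = (Real.cos α) ^ 2} := by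
  ext x
  constructor <;> rintro ⟨α, h1, rfl⟩
  · refine ⟨-α, ?_, by rw [Real.cos_neg]⟩
    rw [show -α - -η = -(α - η) by ring, Real.cos_neg]; exact h1
  · refine ⟨-α, ?_, by rw [Real.cos_neg]⟩
    rw [show -α - η = -(α - -η) by ring, Real.cos_neg]; exact h1

private lemma S_shift (γ η : ℝ) :
    {x : ℝ | ∃ α : ℝ, Real.cos γ ≤ Real.cos (α - η) ∧ x = (Real.cos α) ^ 2}
      = {x : ℝ | ∃ α : ℝ, Real.cos γ ≤ Real.cos (α - (η + π)) ∧ x = (Real.cos α) ^ 2} := by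
  ext x
  constructor <;> rintro ⟨α, h1, rfl⟩
  · refine ⟨α + π, ?_, by rw [Real.cos_add_pi, neg_sq]⟩
    rw [show α + π - (η + π) = α - η by ring]; exact h1
  · refine ⟨α - π, ?_, by rw [Real.cos_sub_pi, neg_sq]⟩
    rw [show α - π - η = α - (η + π) by ring]; exact h1

/-- The core case: `γ ≤ η ≤ π/2`. -/
private lemma core {γ η : ℝ} (hγ : γ ∈ Set.Ioo 0 (π / 2)) (h1 : γ ≤ η) (h2 : η ≤ π / 2) :
    sSup {x : ℝ | ∃ α : ℝ, Real.cos γ ≤ Real.cos (α - η) ∧ x = (Real.cos α) ^ 2}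
      = (Real.cos (η - γ)) ^ 2 := by
  have hπ := Real.pi_pos
  apply le_antisymm
  · apply csSup_le ⟨_, S_nonempty γ η⟩
    rintro x hx
    obtain ⟨β, hβ, rfl⟩ := mem_reduce hγ hx
    obtain ⟨hβ1, hβ2⟩ := abs_le.mp hβ
    have h0 : (0 : ℝ) ≤ η - γ := by linarith
    have hc1 : Real.cos (η + β) ≤ Real.cos (η - γ) :=
      Real.cos_le_cos_of_nonneg_of_le_pi h0 (by linarith [hγ.2]) (by linarith)
    have hc2 : Real.cos (η + γ) ≤ Real.cos (η + β) :=
      Real.cos_le_cos_of_nonneg_of_le_pi (by linarith) (by linarith [hγ.2]) (by linarith)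
    have hsum : 0 ≤ Real.cos (η - γ) + Real.cos (η + γ) := by
      rw [Real.cos_add_cos, show (η - γ + (η + γ)) / 2 = η by ring,
        show (η - γ - (η + γ)) / 2 = -γ by ring, Real.cos_neg]
      have hcη : 0 ≤ Real.cos η := Real.cos_nonneg_of_mem_Icc ⟨by linarith, h2⟩
      have hcγ : 0 ≤ Real.cos γ := Real.cos_nonneg_of_mem_Icc ⟨by linarith [hγ.1], hγ.2.le⟩
      positivity
    exact sq_le_sq' (by linarith) hc1
  · exact le_csSup (S_bdd γ η) (S_nonempty γ η)

theorem sup_cos_sq_on_arc (γ η : ℝ) (hγ : γ ∈ Set.Ioo 0 (π / 2))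
    (hη : η ∈ Set.Icc (-π) π)
    (A₁ A₂ A₃ : Set ℝ)
    (hA₁ : A₁ = Set.Icc (-γ) γ ∪ Set.Icc (π - γ) π ∪ Set.Icc (-π) (-π + γ))
    (hA₂ : A₂ = Set.Icc γ (π / 2) ∪ Set.Icc (-π + γ) (-π / 2))
    (hA₃ : A₃ = Set.Icc (π / 2) (π - γ) ∪ Set.Icc (-π / 2) (-γ)) :
    (η ∈ A₁ → sSup {x : ℝ | ∃ α : ℝ, Real.cos γ ≤ Real.cos (α - η) ∧ x = (Real.cos α) ^ 2} = 1) ∧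
    (η ∈ A₂ → sSup {x : ℝ | ∃ α : ℝ, Real.cos γ ≤ Real.cos (α - η) ∧ x = (Real.cos α) ^ 2}
        = (Real.cos (η - γ)) ^ 2) ∧
    (η ∈ A₃ → sSup {x : ℝ | ∃ α : ℝ, Real.cos γ ≤ Real.cos (α - η) ∧ x = (Real.cos α) ^ 2}
        = (Real.cos (η + γ)) ^ 2) := by
  have hπ := Real.pi_pos
  have hγπ : γ ≤ π := by linarith [hγ.2]
  refine ⟨?_, ?_, ?_⟩
  · -- A₁ case
    intro hmem
    rw [hA₁] at hmem
    apply le_antisymm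
    · apply csSup_le ⟨_, S_nonempty γ η⟩
      rintro x ⟨α, -, rfl⟩
      exact Real.cos_sq_le_one α
    · rcases hmem with (h | h) | h
      · refine le_csSup (S_bdd γ η) ⟨0, cos_ge_of_abs_le hγπ ?_, by simp⟩
        rw [zero_sub, abs_neg]
        exact abs_le.mpr ⟨h.1, h.2⟩
      · refine le_csSup (S_bdd γ η) ⟨π, cos_ge_of_abs_le hγπ ?_, by simp⟩
        exact abs_le.mpr ⟨by linarith [h.1, h.2, hγ.1], by linarith [h.1, h.2, hγ.1]⟩
      · refine le_csSup (S_bdd γ η) ⟨-π, cos_ge_of_abs_le hγπ ?_, by simp⟩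
        exact abs_le.mpr ⟨by linarith [h.1, h.2, hγ.1], by linarith [h.1, h.2, hγ.1]⟩
  · -- A₂ case
    intro hmem
    rw [hA₂] at hmem
    rcases hmem with h | h
    · exact core hγ h.1 h.2
    · rw [S_shift γ η, core hγ (by linarith [h.1] : γ ≤ η + π) (by linarith [h.2]),
        show η + π - γ = (η - γ) + π by ring, Real.cos_add_pi, neg_sq]
  · -- A₃ case
    intro hmem
    rw [hA₃] at hmem
    rcases hmem with h | h
    · rw [S_neg γ η, S_shift γ (-η),
        core hγ (by linarith [h.2] : γ ≤ -η + π) (by linarith [h.1]),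
        show -η + π - γ = -(η + γ) + π by ring, Real.cos_add_pi, Real.cos_neg, neg_sq]
    · rw [S_neg γ η, core hγ (by linarith [h.2] : γ ≤ -η) (by linarith [h.1]),
        show -η - γ = -(η + γ) by ring, Real.cos_neg]
end

section
/- Let γ ∈ (0, π/2), η ∈ [-π, π], and λ₁ ≥ λ₂ ≥ 0. Then sup{λ₁cos²α + λ₂sin²α : α ∈ ℝ, cos(α - η) ≥ cos γ} equals λ₁ if η ∈ A₁, (λ₁-λ₂)cos²(η-γ) + λ₂ if η ∈ A₂, and (λ₁-λ₂)cos²(η+γ) + λ₂ if η ∈ A₃, with A₁, A₂, A₃ as defined from γ. -/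
open Real

private lemma cos_le_cos_aux {s t : ℝ} (hs : 0 ≤ s) (hst : s ≤ t) (h2 : t ≤ 2 * π - s) :
    Real.cos t ≤ Real.cos s := by
  by_cases h : t ≤ π
  · exact Real.cos_le_cos_of_nonneg_of_le_pi hs h hst
  · push_neg at h
    have h3 : Real.cos t = Real.cos (2 * π - t) := by
      rw [Real.cos_sub, Real.cos_two_pi, Real.sin_two_pi]; ring
    rw [h3]
    exact Real.cos_le_cos_of_nonneg_of_le_pi hs (by linarith) (by linarith)

private lemma reduce_arc {γ α η : ℝ} (hγ0 : 0 ≤ γ) (hγπ : γ ≤ π)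
    (h : Real.cos γ ≤ Real.cos (α - η)) :
    ∃ δ : ℝ, -γ ≤ δ ∧ δ ≤ γ ∧ Real.cos α ^ 2 = Real.cos (η + δ) ^ 2 := by
  have hπ := Real.pi_pos
  set k : ℤ := round ((α - η) / (2 * π)) with hk
  set δ : ℝ := α - η - k * (2 * π) with hδ
  have hδeq : δ = ((α - η) / (2 * π) - k) * (2 * π) := by
    field_simp [hδ]; ring
  have hδπ : |δ| ≤ π := by
    have h1 : |(α - η) / (2 * π) - (k : ℝ)| ≤ 1 / 2 := abs_sub_round _
    rw [hδeq, abs_mul, abs_of_pos (by linarith : (0:ℝ) < 2 * π)]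
    nlinarith [abs_nonneg ((α - η) / (2 * π) - (k : ℝ))]
  have hcosδ : Real.cos δ = Real.cos (α - η) := by
    have : α - η = δ + k * (2 * π) := by rw [hδ]; ring
    rw [this, Real.cos_add_int_mul_two_pi]
  have habs : |δ| ≤ γ := by
    by_contra hcon
    push_neg at hcon
    have : Real.cos |δ| < Real.cos γ :=
      Real.cos_lt_cos_of_nonneg_of_le_pi hγ0 hδπ hcon
    rw [Real.cos_abs, hcosδ] at this
    linarith
  refine ⟨δ, (abs_le.mp habs).1, (abs_le.mp habs).2, ?_⟩
  have : α = η + δ + k * (2 * π) := by rw [hδ]; ring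
  rw [this, Real.cos_add_int_mul_two_pi]

private lemma cos_sq_le_cos_sq {u v : ℝ} (h : Real.cos (2 * u) ≤ Real.cos (2 * v)) :
    Real.cos u ^ 2 ≤ Real.cos v ^ 2 := by
  rw [Real.cos_sq, Real.cos_sq]; linarith

theorem sup_quadratic_on_arc (γ η lam₁ lam₂ : ℝ) (hγ : γ ∈ Set.Ioo 0 (π / 2))
    (hη : η ∈ Set.Icc (-π) π) (h₁₂ : lam₂ ≤ lam₁) (h₂ : 0 ≤ lam₂)
    (A₁ A₂ A₃ : Set ℝ)
    (hA₁ : A₁ = Set.Icc (-γ) γ ∪ Set.Icc (π - γ) π ∪ Set.Icc (-π) (-π + γ))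
    (hA₂ : A₂ = Set.Icc γ (π / 2) ∪ Set.Icc (-π + γ) (-π / 2))
    (hA₃ : A₃ = Set.Icc (π / 2) (π - γ) ∪ Set.Icc (-π / 2) (-γ)) :
    (η ∈ A₁ →
      sSup {x : ℝ | ∃ α : ℝ, Real.cos γ ≤ Real.cos (α - η) ∧
          x = lam₁ * (Real.cos α) ^ 2 + lam₂ * (Real.sin α) ^ 2} = lam₁) ∧
    (η ∈ A₂ →
      sSup {x : ℝ | ∃ α : ℝ, Real.cos γ ≤ Real.cos (α - η) ∧
          x = lam₁ * (Real.cos α) ^ 2 + lam₂ * (Real.sin α) ^ 2}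
        = (lam₁ - lam₂) * (Real.cos (η - γ)) ^ 2 + lam₂) ∧
    (η ∈ A₃ →
      sSup {x : ℝ | ∃ α : ℝ, Real.cos γ ≤ Real.cos (α - η) ∧
          x = lam₁ * (Real.cos α) ^ 2 + lam₂ * (Real.sin α) ^ 2}
        = (lam₁ - lam₂) * (Real.cos (η + γ)) ^ 2 + lam₂) := by
  obtain ⟨hγ0, hγ2⟩ := hγ
  obtain ⟨hηl, hηr⟩ := hη
  have hπ := Real.pi_pos
  have hγπ : γ ≤ π := by linarith
  set S : Set ℝ := {x : ℝ | ∃ α : ℝ, Real.cos γ ≤ Real.cos (α - η) ∧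
      x = lam₁ * (Real.cos α) ^ 2 + lam₂ * (Real.sin α) ^ 2} with hS
  -- generic upper bound translator
  have key : ∀ b : ℝ, (∀ δ : ℝ, -γ ≤ δ → δ ≤ γ → Real.cos (η + δ) ^ 2 ≤ b) →
      ∀ x ∈ S, x ≤ (lam₁ - lam₂) * b + lam₂ := by
    intro b hb x hx
    obtain ⟨α, hcons, hval⟩ := hx
    obtain ⟨δ, hδ1, hδ2, hδ3⟩ := reduce_arc hγ0.le hγπ hcons
    have hb' := hb δ hδ1 hδ2
    have hsc := Real.sin_sq_add_cos_sq α
    nlinarith [hδ3]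
  refine ⟨?_, ?_, ?_⟩
  · -- A₁
    intro hmem
    rw [hA₁] at hmem
    have hwit : lam₁ ∈ S := by
      rcases hmem with (h | h) | h
      · exact ⟨0, by
          simpa [Real.cos_abs] using Real.cos_le_cos_of_nonneg_of_le_pi
            (abs_nonneg η) hγπ (abs_le.mpr ⟨h.1, h.2⟩),
          by simp⟩
      · refine ⟨π, ?_, by simp⟩
        have : π - η = |π - η| := (abs_of_nonneg (by linarith [h.2])).symm
        rw [show Real.cos (π - η) = Real.cos (η - π) by rw [← Real.cos_neg]; ring_nf]
        rw [show Real.cos (η - π) = Real.cos |η - π| by rw [Real.cos_abs]]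
        exact Real.cos_le_cos_of_nonneg_of_le_pi (abs_nonneg _) hγπ
          (abs_le.mpr ⟨by linarith [h.1], by linarith [h.2]⟩)
      · refine ⟨-π, ?_, by simp⟩
        rw [show Real.cos (-π - η) = Real.cos |(-π) - η| by rw [← Real.cos_abs]]
        exact Real.cos_le_cos_of_nonneg_of_le_pi (abs_nonneg _) hγπ
          (abs_le.mpr ⟨by linarith [h.2], by linarith [h.1]⟩)
    have hub : ∀ x ∈ S, x ≤ lam₁ := by
      have := key 1 (fun δ _ _ => by nlinarith [Real.neg_one_le_cos (η + δ), Real.cos_le_one (η + δ)])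
      intro x hx
      have := this x hx
      linarith
    exact IsGreatest.csSup_eq ⟨hwit, hub⟩
  · -- A₂
    intro hmem
    rw [hA₂] at hmem
    have hwit : (lam₁ - lam₂) * (Real.cos (η - γ)) ^ 2 + lam₂ ∈ S := by
      refine ⟨η - γ, by rw [show η - γ - η = -γ by ring, Real.cos_neg], ?_⟩
      nlinarith [Real.sin_sq_add_cos_sq (η - γ)]
    have hub : ∀ x ∈ S, x ≤ (lam₁ - lam₂) * (Real.cos (η - γ)) ^ 2 + lam₂ := by
      apply key
      intro δ hδ1 hδ2
      apply cos_sq_le_cos_sq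
      rcases hmem with h | h
      · -- η ∈ [γ, π/2]
        have := cos_le_cos_aux (s := 2 * η - 2 * γ) (t := 2 * η + 2 * δ)
          (by linarith [h.1]) (by linarith) (by linarith [h.2])
        calc Real.cos (2 * (η + δ)) = Real.cos (2 * η + 2 * δ) := by ring_nf
          _ ≤ Real.cos (2 * η - 2 * γ) := this
          _ = Real.cos (2 * (η - γ)) := by ring_nf
      · -- η ∈ [-π + γ, -π/2]
        have := cos_le_cos_aux (s := 2 * π + 2 * η - 2 * γ) (t := 2 * π + 2 * η + 2 * δ)
          (by linarith [h.1]) (by linarith) (by linarith [h.2])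
        have e1 : Real.cos (2 * (η + δ)) = Real.cos (2 * π + 2 * η + 2 * δ) := by
          rw [show 2 * π + 2 * η + 2 * δ = 2 * (η + δ) + 2 * π by ring, Real.cos_add_two_pi]
        have e2 : Real.cos (2 * (η - γ)) = Real.cos (2 * π + 2 * η - 2 * γ) := by
          rw [show 2 * π + 2 * η - 2 * γ = 2 * (η - γ) + 2 * π by ring, Real.cos_add_two_pi]
        rw [e1, e2]; exact this
    exact IsGreatest.csSup_eq ⟨hwit, hub⟩
  · -- A₃
    intro hmem
    rw [hA₃] at hmem
    have hwit : (lam₁ - lam₂) * (Real.cos (η + γ)) ^ 2 + lam₂ ∈ S := by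
      refine ⟨η + γ, by rw [show η + γ - η = γ by ring], ?_⟩
      nlinarith [Real.sin_sq_add_cos_sq (η + γ)]
    have hub : ∀ x ∈ S, x ≤ (lam₁ - lam₂) * (Real.cos (η + γ)) ^ 2 + lam₂ := by
      apply key
      intro δ hδ1 hδ2
      apply cos_sq_le_cos_sq
      rcases hmem with h | h
      · -- η ∈ [π/2, π - γ]
        have := cos_le_cos_aux (s := 2 * π - 2 * η - 2 * γ) (t := 2 * π - 2 * η - 2 * δ)
          (by linarith [h.2]) (by linarith) (by linarith [h.1])
        have e1 : Real.cos (2 * (η + δ)) = Real.cos (2 * π - 2 * η - 2 * δ) := by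
          rw [show 2 * π - 2 * η - 2 * δ = 2 * π - (2 * (η + δ)) by ring,
            Real.cos_sub, Real.cos_two_pi, Real.sin_two_pi]; ring
        have e2 : Real.cos (2 * (η + γ)) = Real.cos (2 * π - 2 * η - 2 * γ) := by
          rw [show 2 * π - 2 * η - 2 * γ = 2 * π - (2 * (η + γ)) by ring,
            Real.cos_sub, Real.cos_two_pi, Real.sin_two_pi]; ring
        rw [e1, e2]; exact this
      · -- η ∈ [-π/2, -γ]
        have := cos_le_cos_aux (s := -2 * η - 2 * γ) (t := -2 * η - 2 * δ)
          (by linarith [h.2]) (by linarith) (by linarith [h.1])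
        have e1 : Real.cos (2 * (η + δ)) = Real.cos (-2 * η - 2 * δ) := by
          rw [show -2 * η - 2 * δ = -(2 * (η + δ)) by ring, Real.cos_neg]
        have e2 : Real.cos (2 * (η + γ)) = Real.cos (-2 * η - 2 * γ) := by
          rw [show -2 * η - 2 * γ = -(2 * (η + γ)) by ring, Real.cos_neg]
        rw [e1, e2]; exact this
    exact IsGreatest.csSup_eq ⟨hwit, hub⟩
end

section
/- Let z₁₁, z₁₂, z₂₁, z₂₂ be real numbers and W the symmetric 2×2 matrix with entries W₁₁ = z₁₁² + z₂₁², W₁₂ = W₂₁ = z₁₁z₁₂ + z₂₁z₂₂, W₂₂ = z₁₂² + z₂₂². Writing (z₁₁ - z₂₂)/√2 = ρ₁ sin U₁, (z₁₂ + z₂₁)/√2 = ρ₁ cos U₁, (z₁₁ + z₂₂)/√2 = ρ₂ cos U₂, (z₂₁ - z₁₂)/√2 = ρ₂ sin U₂ for some ρ₁, ρ₂ ≥ 0 and angles U₁, U₂, the eigenvalues of W are λ₁ = (ρ₁+ρ₂)²/2 and λ₂ = (ρ₁-ρ₂)²/2, and W = Pᵀ diag(λ₁, λ₂) P where P is the rotation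 matrix by angle (U₁+U₂)/2 - π/4. -/
open Real Matrix

set_option maxHeartbeats 1000000 in
theorem W_spectral_decomposition
    (z₁₁ z₁₂ z₂₁ z₂₂ ρ₁ ρ₂ U₁ U₂ lam₁ lam₂ ψ : ℝ)
    (hρ₁ : 0 ≤ ρ₁) (hρ₂ : 0 ≤ ρ₂)
    (h1 : (z₁₁ - z₂₂) / Real.sqrt 2 = ρ₁ * Real.sin U₁)
    (h2 : (z₁₂ + z₂₁) / Real.sqrt 2 = ρ₁ * Real.cos U₁)
    (h3 : (z₁₁ + z₂₂) / Real.sqrt 2 = ρ₂ * Real.cos U₂)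
    (h4 : (z₂₁ - z₁₂) / Real.sqrt 2 = ρ₂ * Real.sin U₂)
    (hl₁ : lam₁ = (ρ₁ + ρ₂) ^ 2 / 2) (hl₂ : lam₂ = (ρ₁ - ρ₂) ^ 2 / 2)
    (hψ : ψ = (U₁ + U₂) / 2 - π / 4)
    (W P : Matrix (Fin 2) (Fin 2) ℝ)
    (hW : W = !![z₁₁ ^ 2 + z₂₁ ^ 2, z₁₁ * z₁₂ + z₂₁ * z₂₂;
                 z₁₁ * z₁₂ + z₂₁ * z₂₂, z₁₂ ^ 2 + z₂₂ ^ 2])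
    (hP : P = !![Real.cos ψ, -Real.sin ψ; Real.sin ψ, Real.cos ψ]) :
    W = Pᵀ * Matrix.diagonal ![lam₁, lam₂] * P ∧
    (∃ v : Fin 2 → ℝ, v ≠ 0 ∧ W.mulVec v = lam₁ • v) ∧
    (∃ v : Fin 2 → ℝ, v ≠ 0 ∧ W.mulVec v = lam₂ • v) := by
  have hs2 : Real.sqrt 2 ≠ 0 := by positivity
  have hE : Real.sqrt 2 ^ 2 = 2 := Real.sq_sqrt (by norm_num)
  have A : z₁₁ - z₂₂ = Real.sqrt 2 * (ρ₁ * Real.sin U₁) := by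
    field_simp at h1; linarith [h1]
  have B : z₁₂ + z₂₁ = Real.sqrt 2 * (ρ₁ * Real.cos U₁) := by
    field_simp at h2; linarith [h2]
  have C : z₁₁ + z₂₂ = Real.sqrt 2 * (ρ₂ * Real.cos U₂) := by
    field_simp at h3; linarith [h3]
  have D : z₂₁ - z₁₂ = Real.sqrt 2 * (ρ₂ * Real.sin U₂) := by
    field_simp at h4; linarith [h4]
  have hz11 : z₁₁ = Real.sqrt 2 * (ρ₁ * Real.sin U₁ + ρ₂ * Real.cos U₂) / 2 := by
    linarith
  have hz22 : z₂₂ = Real.sqrt 2 * (ρ₂ * Real.cos U₂ - ρ₁ * Real.sin U₁) / 2 := by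
    linarith
  have hz21 : z₂₁ = Real.sqrt 2 * (ρ₁ * Real.cos U₁ + ρ₂ * Real.sin U₂) / 2 := by
    linarith
  have hz12 : z₁₂ = Real.sqrt 2 * (ρ₁ * Real.cos U₁ - ρ₂ * Real.sin U₂) / 2 := by
    linarith
  have hF : Real.cos ψ ^ 2 + Real.sin ψ ^ 2 = 1 := Real.cos_sq_add_sin_sq ψ
  have hI : Real.sin U₁ ^ 2 + Real.cos U₁ ^ 2 = 1 := Real.sin_sq_add_cos_sq U₁
  have hJ : Real.sin U₂ ^ 2 + Real.cos U₂ ^ 2 = 1 := Real.sin_sq_add_cos_sq U₂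
  have h2ψ : 2 * ψ = (U₁ + U₂) - π / 2 := by rw [hψ]; ring
  have hG : Real.cos ψ ^ 2 - Real.sin ψ ^ 2
      = Real.sin U₁ * Real.cos U₂ + Real.cos U₁ * Real.sin U₂ := by
    have h := Real.cos_two_mul ψ
    rw [h2ψ, Real.cos_sub_pi_div_two, Real.sin_add] at h
    linear_combination -h - hF
  have hH : 2 * (Real.sin ψ * Real.cos ψ)
      = -(Real.cos U₁ * Real.cos U₂ - Real.sin U₁ * Real.sin U₂) := by
    have h := Real.sin_two_mul ψ
    rw [h2ψ, Real.sin_sub_pi_div_two, Real.cos_add] at h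
    linarith
  have hdec : W = Pᵀ * Matrix.diagonal ![lam₁, lam₂] * P := by
    subst hW hP hl₁ hl₂
    ext i j
    fin_cases i <;> fin_cases j <;>
      simp [Matrix.mul_apply, Fin.sum_univ_two, Matrix.diagonal,
        Matrix.vecHead, Matrix.vecTail, hz11, hz12, hz21, hz22]
    · linear_combination
        hE * ((ρ₁ * Real.sin U₁ + ρ₂ * Real.cos U₂) ^ 2 +
          (ρ₁ * Real.cos U₁ + ρ₂ * Real.sin U₂) ^ 2) / 4 +
        hI * (ρ₁ ^ 2 / 2) + hJ * (ρ₂ ^ 2 / 2) - hG * (ρ₁ * ρ₂) -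
        hF * ((ρ₁ ^ 2 + ρ₂ ^ 2) / 2)
    · linear_combination hH * (ρ₁ * ρ₂) +
        hE * (ρ₁ * ρ₂ * (Real.cos U₁ * Real.cos U₂ - Real.sin U₁ * Real.sin U₂) / 2)
    · linear_combination hH * (ρ₁ * ρ₂) +
        hE * (ρ₁ * ρ₂ * (Real.cos U₁ * Real.cos U₂ - Real.sin U₁ * Real.sin U₂) / 2)
    · linear_combination
        hE * ((ρ₁ * Real.cos U₁ - ρ₂ * Real.sin U₂) ^ 2 +
          (ρ₂ * Real.cos U₂ - ρ₁ * Real.sin U₁) ^ 2) / 4 +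
        hI * (ρ₁ ^ 2 / 2) + hJ * (ρ₂ ^ 2 / 2) + hG * (ρ₁ * ρ₂) -
        hF * ((ρ₁ ^ 2 + ρ₂ ^ 2) / 2)
  refine ⟨hdec, ⟨![Real.cos ψ, -Real.sin ψ], ?_, ?_⟩,
    ⟨![Real.sin ψ, Real.cos ψ], ?_, ?_⟩⟩
  · intro h
    have h0 := congrFun h 0
    have h1' := congrFun h 1
    simp at h0 h1'
    nlinarith [hF]
  · rw [hdec]
    funext i
    fin_cases i <;>
      simp [Matrix.mulVec, Matrix.mul_apply, dotProduct,
        Fin.sum_univ_two, Matrix.diagonal, hP, Matrix.vecHead, Matrix.vecTail]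
    · linear_combination hF * (lam₁ * Real.cos ψ)
    · linear_combination hF * (-(lam₁ * Real.sin ψ))
  · intro h
    have h0 := congrFun h 0
    have h1' := congrFun h 1
    simp at h0 h1'
    nlinarith [hF]
  · rw [hdec]
    funext i
    fin_cases i <;>
      simp [Matrix.mulVec, Matrix.mul_apply, dotProduct,
        Fin.sum_univ_two, Matrix.diagonal, hP, Matrix.vecHead, Matrix.vecTail]
    · linear_combination hF * (lam₂ * Real.sin ψ)
    · linear_combination hF * (lam₂ * Real.cos ψ)
end
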